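/- Let U¹, U² : ℝ² → Matrix (Fin N) (Fin N) ℂ be continuously differentiable, written as functions of ξ₊ = x + iy and ξ₋ = x − iy, satisfying the zero-curvature condition ∂₋U¹ − ∂₊U² + [U¹, U²] = 0, and let Φ : ℝ² → Matrix (Fin N) (Fin N) ℂ be continuously differentiable, everywhere invertible, with ∂₊Φ = U¹·Φ and ∂₋Φ = U²·Φ. Let g : ℂ → ℂ be holomorphic and let ḡ(ξ₋) denote its complex conjugate function. Then the surface F := Φ⁻¹·(g(ξ₊)·U¹ + ḡ(ξ₋)·U²)·Φ associated with the conformal symmetry satisfies ∂₊F = Φ⁻¹·(∂₊(g·U¹) + ḡ·∂₋U¹)·Φ and ∂₋F = Φ⁻¹·(g·∂₊U² + ∂₋(ḡ·U²))·Φ. -/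

import Mathlib

/-!
Since `∂Φ = UΦ`, conjugation by `Φ` turns `∂` into a covariant derivative:
`∂(Φ⁻¹MΦ) = Φ⁻¹(∂M + [M, U])Φ`. For `M = gU¹ + ḡU²` and `∂ = ∂₊`, the antiholomorphic factor
`ḡ` is constant for `∂₊` and `[gU¹, U¹] = 0`, which leaves `Φ⁻¹(∂₊(gU¹) + ḡ(∂₊U² + [U², U¹]))Φ`;
the zero-curvature condition turns `∂₊U² + [U², U¹]` into `∂₋U¹`. The `∂₋` case is symmetric.
-/

open Matrix

noncomputable section

attribute [local instance] Matrix.normedAddCommGroup Matrix.normedSpace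

/-- The Wirtinger derivative `∂₊ = ½(∂/∂x − i ∂/∂y)` of a matrix-valued map on `ℝ²`. -/
def dp {N : ℕ} (P : ℝ × ℝ → Matrix (Fin N) (Fin N) ℂ) (p : ℝ × ℝ) :
    Matrix (Fin N) (Fin N) ℂ :=
  (2 : ℂ)⁻¹ • (fderiv ℝ P p (1, 0) - Complex.I • fderiv ℝ P p (0, 1))

/-- The Wirtinger derivative `∂₋ = ½(∂/∂x + i ∂/∂y)` of a matrix-valued map on `ℝ²`. -/
def dm {N : ℕ} (P : ℝ × ℝ → Matrix (Fin N) (Fin N) ℂ) (p : ℝ × ℝ) :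
    Matrix (Fin N) (Fin N) ℂ :=
  (2 : ℂ)⁻¹ • (fderiv ℝ P p (1, 0) + Complex.I • fderiv ℝ P p (0, 1))

section MatrixCalculus

variable {n : Type*} [Fintype n] [DecidableEq n] {E : Type*} [NormedAddCommGroup E]
  [NormedSpace ℝ E] {A B : E → Matrix n n ℂ} {x : E}

/- `fderiv` only sees the topology of `Matrix n n ℂ`, which the operator norm `linftyOp` shares
with the sup norm; this gives access to the calculus of complete normed algebras. -/

theorem DifferentiableAt.matrix_mul (hA : DifferentiableAt ℝ A x)
    (hB : DifferentiableAt ℝ B x) : DifferentiableAt ℝ (fun y => A y * B y) x := by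
  let _ := Matrix.linftyOpNormedRing (n := n) (α := ℂ)
  let _ := Matrix.linftyOpNormedAlgebra (R := ℝ) (n := n) (α := ℂ)
  exact hA.mul hB

theorem fderiv_matrix_mul_apply (hA : DifferentiableAt ℝ A x) (hB : DifferentiableAt ℝ B x)
    (v : E) :
    fderiv ℝ (fun y => A y * B y) x v = fderiv ℝ A x v * B x + A x * fderiv ℝ B x v := by
  let _ := Matrix.linftyOpNormedRing (n := n) (α := ℂ)
  let _ := Matrix.linftyOpNormedAlgebra (R := ℝ) (n := n) (α := ℂ)
  have h : fderiv ℝ (fun y => A y * B y) x v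
      = (A x • fderiv ℝ B x + MulOpposite.op (B x) • fderiv ℝ A x) v :=
    congrArg (· v) (fderiv_fun_mul' hA hB)
  rw [h]
  simp [add_comm]

theorem DifferentiableAt.matrix_inv (hA : DifferentiableAt ℝ A x) (hu : IsUnit (A x)) :
    DifferentiableAt ℝ (fun y => (A y)⁻¹) x := by
  let R := Matrix.linftyOpNormedRing (n := n) (α := ℂ)
  let _ := Matrix.linftyOpNormedAlgebra (R := ℝ) (n := n) (α := ℂ)
  have _ : @CompleteSpace _ R.toUniformSpace := FiniteDimensional.complete ℝ _
  simp only [Matrix.nonsing_inv_eq_ringInverse]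
  exact hA.inverse hu

theorem fderiv_matrix_inv_apply (hA : DifferentiableAt ℝ A x) (hu : IsUnit (A x)) (v : E) :
    fderiv ℝ (fun y => (A y)⁻¹) x v = -((A x)⁻¹ * fderiv ℝ A x v * (A x)⁻¹) := by
  let R := Matrix.linftyOpNormedRing (n := n) (α := ℂ)
  let _ := Matrix.linftyOpNormedAlgebra (R := ℝ) (n := n) (α := ℂ)
  have _ : @CompleteSpace _ R.toUniformSpace := FiniteDimensional.complete ℝ _
  obtain ⟨u, hu⟩ := hu
  have hinv := hasFDerivAt_ringInverse (𝕜 := ℝ) u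
  rw [hu] at hinv
  have h : fderiv ℝ (fun y => (A y)⁻¹) x v
      = ((-ContinuousLinearMap.mulLeftRight ℝ _ ↑u⁻¹ ↑u⁻¹).comp (fderiv ℝ A x)) v := by
    simp only [Matrix.nonsing_inv_eq_ringInverse]
    exact congrArg (· v) (hinv.comp x hA.hasFDerivAt).fderiv
  rw [h, Matrix.coe_units_inv, hu]
  rfl

end MatrixCalculus

section Wirtinger

def wirtinger {M : Type*} [AddCommGroup M] [Module ℝ M] [TopologicalSpace M] [Module ℂ M] (a : ℂ)
    (P : ℝ × ℝ → M) (p : ℝ × ℝ) : M :=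
  (2 : ℂ)⁻¹ • (fderiv ℝ P p (1, 0) + a • fderiv ℝ P p (0, 1))

theorem dp_eq_wirtinger {N : ℕ} : dp (N := N) = wirtinger (-Complex.I) := by
  funext P p
  rw [dp, wirtinger, neg_smul, sub_eq_add_neg]

theorem dm_eq_wirtinger {N : ℕ} : dm (N := N) = wirtinger Complex.I := rfl

variable {M : Type*} [NormedAddCommGroup M] [NormedSpace ℝ M] {a : ℂ} {A B : ℝ × ℝ → M}
  {p : ℝ × ℝ}

theorem wirtinger_add [Module ℂ M] (hA : DifferentiableAt ℝ A p) (hB : DifferentiableAt ℝ B p) :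
    wirtinger a (fun q => A q + B q) p = wirtinger a A p + wirtinger a B p := by
  simp only [wirtinger, fderiv_fun_add hA hB, _root_.add_apply]
  module

theorem wirtinger_smul [NormedSpace ℂ M] [IsScalarTower ℝ ℂ M] {c : ℝ × ℝ → ℂ}
    (hc : DifferentiableAt ℝ c p) (hA : DifferentiableAt ℝ A p) :
    wirtinger a (fun q => c q • A q) p = wirtinger a c p • A p + c p • wirtinger a A p := by
  simp only [wirtinger, fderiv_fun_smul hc hA, _root_.add_apply, FunLike.coe_smul, Pi.smul_apply,
    ContinuousLinearMap.smulRight_apply]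
  module

end Wirtinger

section MatrixWirtinger

variable {n : Type*} [Fintype n] [DecidableEq n] {a : ℂ} {A B Φ : ℝ × ℝ → Matrix n n ℂ}
  {p : ℝ × ℝ}

theorem wirtinger_matrix_mul (hA : DifferentiableAt ℝ A p) (hB : DifferentiableAt ℝ B p) :
    wirtinger a (fun q => A q * B q) p = wirtinger a A p * B p + A p * wirtinger a B p := by
  rw [wirtinger, wirtinger, wirtinger, fderiv_matrix_mul_apply hA hB, fderiv_matrix_mul_apply hA hB]
  simp only [Matrix.smul_mul, Matrix.mul_smul, mul_add, add_mul]
  module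

theorem wirtinger_matrix_inv (hA : DifferentiableAt ℝ A p) (hu : IsUnit (A p)) :
    wirtinger a (fun q => (A q)⁻¹) p = -((A p)⁻¹ * wirtinger a A p * (A p)⁻¹) := by
  rw [wirtinger, wirtinger, fderiv_matrix_inv_apply hA hu, fderiv_matrix_inv_apply hA hu]
  simp only [Matrix.smul_mul, Matrix.mul_smul, mul_add, add_mul]
  module

theorem wirtinger_inv_mul_mul {U : Matrix n n ℂ} (hΦ : DifferentiableAt ℝ Φ p)
    (hu : IsUnit (Φ p)) (hA : DifferentiableAt ℝ A p) (hΦU : wirtinger a Φ p = U * Φ p) :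
    wirtinger a (fun q => (Φ q)⁻¹ * A q * Φ q) p
      = (Φ p)⁻¹ * (wirtinger a A p + ⁅A p, U⁆) * Φ p := by
  have hΦΦinv : Φ p * (Φ p)⁻¹ = 1 :=
    Matrix.mul_nonsing_inv _ ((Matrix.isUnit_iff_isUnit_det _).mp hu)
  have hinv : wirtinger a (fun q => (Φ q)⁻¹) p = -((Φ p)⁻¹ * U) := by
    rw [wirtinger_matrix_inv hΦ hu, hΦU, mul_assoc, mul_assoc, hΦΦinv, mul_one]
  rw [wirtinger_matrix_mul ((hΦ.matrix_inv hu).matrix_mul hA) hΦ,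
    wirtinger_matrix_mul (hΦ.matrix_inv hu) hA, hinv, hΦU, Ring.lie_def]
  noncomm_ring

theorem wirtinger_inv_mul_smul_add_smul_mul {U V : ℝ × ℝ → Matrix n n ℂ} {f c : ℝ × ℝ → ℂ}
    (hΦ : DifferentiableAt ℝ Φ p) (hu : IsUnit (Φ p)) (hU : DifferentiableAt ℝ U p)
    (hV : DifferentiableAt ℝ V p) (hf : DifferentiableAt ℝ f p) (hc : DifferentiableAt ℝ c p)
    (hΦU : wirtinger a Φ p = U p * Φ p) (hc₀ : wirtinger a c p = 0) :
    wirtinger a (fun q => (Φ q)⁻¹ * (f q • U q + c q • V q) * Φ q) p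
      = (Φ p)⁻¹ * (wirtinger a (fun q => f q • U q) p + c p • (wirtinger a V p + ⁅V p, U p⁆))
          * Φ p := by
  have hfU := hf.fun_smul hU
  have hcV := hc.fun_smul hV
  -- closed by `exact`, not `rw`: the generic lemmas see `Matrix n n ℂ` through its sup-norm
  -- instances, which `rw` does not identify with the instances in the goal
  have hsum : wirtinger a (fun q => f q • U q + c q • V q) p
      = wirtinger a (fun q => f q • U q) p + c p • wirtinger a V p := by
    have h := (wirtinger_add (a := a) hfU hcV).trans (congrArg _ (wirtinger_smul hc hV))
    rw [hc₀, zero_smul, zero_add] at h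
    exact h
  rw [wirtinger_inv_mul_mul hΦ hu (hfU.fun_add hcV) hΦU, hsum]
  congr 2
  simp only [Ring.lie_def, add_mul, mul_add, Matrix.smul_mul, Matrix.mul_smul]
  module

end MatrixWirtinger

section Holomorphic

open Complex

variable {g : ℂ → ℂ} {p : ℝ × ℝ}

theorem hasFDerivAt_comp_add_mul_I (hg : DifferentiableAt ℂ g (p.1 + p.2 * I)) :
    HasFDerivAt (fun q : ℝ × ℝ => g (q.1 + q.2 * I))
      (deriv g (p.1 + p.2 * I) • (equivRealProdCLM.symm : ℝ × ℝ →L[ℝ] ℂ)) p := by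
  have hL : HasFDerivAt (fun q : ℝ × ℝ => (q.1 : ℂ) + q.2 * I)
      (equivRealProdCLM.symm : ℝ × ℝ →L[ℝ] ℂ) p :=
    (equivRealProdCLM.symm : ℝ × ℝ →L[ℝ] ℂ).hasFDerivAt.congr_of_eventuallyEq
      (.of_forall fun q => (equivRealProdCLM_symm_apply q).symm)
  exact hg.hasDerivAt.comp_hasFDerivAt p hL

theorem wirtinger_I_comp_add_mul_I (hg : DifferentiableAt ℂ g (p.1 + p.2 * I)) :
    wirtinger I (fun q : ℝ × ℝ => g (q.1 + q.2 * I)) p = 0 := by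
  simp only [wirtinger, (hasFDerivAt_comp_add_mul_I hg).fderiv, _root_.smul_apply,
    ContinuousLinearEquiv.coe_coe, equivRealProdCLM_symm_apply, smul_eq_mul]
  push_cast
  linear_combination (2⁻¹ * deriv g (p.1 + p.2 * I)) * I_sq

theorem wirtinger_neg_I_conj_comp_add_mul_I (hg : DifferentiableAt ℂ g (p.1 + p.2 * I)) :
    wirtinger (-I) (fun q : ℝ × ℝ => starRingEnd ℂ (g (q.1 + q.2 * I))) p = 0 := by
  have h : HasFDerivAt (fun q : ℝ × ℝ => starRingEnd ℂ (g (q.1 + q.2 * I))) _ p :=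
    (hasFDerivAt_comp_add_mul_I hg).star
  simp only [wirtinger, h.fderiv, ContinuousLinearMap.comp_apply, _root_.smul_apply,
    ContinuousLinearEquiv.coe_coe, equivRealProdCLM_symm_apply, smul_eq_mul, starL'_apply,
    RCLike.star_def, map_mul, map_add, conj_ofReal, conj_I]
  push_cast
  linear_combination (2⁻¹ * starRingEnd ℂ (deriv g (p.1 + p.2 * I))) * I_sq

end Holomorphic

/-- If `U¹, U²` (as functions of `ξ₊ = x + iy`, `ξ₋ = x − iy`) satisfy the zero-curvature
condition `∂₋U¹ − ∂₊U² + [U¹, U²] = 0`, `Φ` is an invertible solution of the linear spectral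
problem `∂₊Φ = U¹Φ`, `∂₋Φ = U²Φ`, and `g` is holomorphic with conjugate `ḡ`, then the surface
`F = Φ⁻¹·(g(ξ₊)U¹ + ḡ(ξ₋)U²)·Φ` associated with the conformal symmetry satisfies
`∂₊F = Φ⁻¹·(∂₊(gU¹) + ḡ∂₋U¹)·Φ` and `∂₋F = Φ⁻¹·(g∂₊U² + ∂₋(ḡU²))·Φ`. -/
theorem conformal_symmetry_surface {N : ℕ}
    (U1 U2 Phi : ℝ × ℝ → Matrix (Fin N) (Fin N) ℂ)
    (hU1 : ContDiff ℝ 1 U1) (hU2 : ContDiff ℝ 1 U2)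
    (hPhi : ContDiff ℝ 1 Phi)
    (hZC : ∀ p, dm U1 p - dp U2 p + (U1 p * U2 p - U2 p * U1 p) = 0)
    (hinv : ∀ p, IsUnit (Phi p))
    (hlsp1 : ∀ p, dp Phi p = U1 p * Phi p)
    (hlsp2 : ∀ p, dm Phi p = U2 p * Phi p)
    (g : ℂ → ℂ) (hg : Differentiable ℂ g)
    (G Gbar : ℝ × ℝ → ℂ)
    (hG : G = fun p => g ((p.1 : ℂ) + (p.2 : ℂ) * Complex.I))
    (hGbar : Gbar = fun p => (starRingEnd ℂ) (g ((p.1 : ℂ) + (p.2 : ℂ) * Complex.I)))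
    (F : ℝ × ℝ → Matrix (Fin N) (Fin N) ℂ)
    (hF : F = fun p => (Phi p)⁻¹ * (G p • U1 p + Gbar p • U2 p) * Phi p) :
    ∀ p, dp F p
        = (Phi p)⁻¹ * (dp (fun q => G q • U1 q) p + Gbar p • dm U1 p) * Phi p
      ∧ dm F p
        = (Phi p)⁻¹ * (G p • dp U2 p + dm (fun q => Gbar q • U2 q) p) * Phi p := by
  intro p
  simp only [dp_eq_wirtinger, dm_eq_wirtinger] at hZC hlsp1 hlsp2 ⊢
  have hU1p := hU1.differentiable one_ne_zero p
  have hU2p := hU2.differentiable one_ne_zero p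
  have hPhip := hPhi.differentiable one_ne_zero p
  have hgp := (hasFDerivAt_comp_add_mul_I (p := p) (hg _)).differentiableAt
  have hGp : DifferentiableAt ℝ G p := hG ▸ hgp
  have hGbarp : DifferentiableAt ℝ Gbar p := hGbar ▸ hgp.star
  have hG₀ : wirtinger Complex.I G p = 0 := hG ▸ wirtinger_I_comp_add_mul_I (hg _)
  have hGbar₀ : wirtinger (-Complex.I) Gbar p = 0 :=
    hGbar ▸ wirtinger_neg_I_conj_comp_add_mul_I (hg _)
  have hZC₁ : wirtinger (-Complex.I) U2 p + ⁅U2 p, U1 p⁆ = wirtinger Complex.I U1 p := by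
    rw [Ring.lie_def]; linear_combination (norm := abel) -hZC p
  have hZC₂ : wirtinger Complex.I U1 p + ⁅U1 p, U2 p⁆ = wirtinger (-Complex.I) U2 p := by
    rw [Ring.lie_def]; linear_combination (norm := abel) hZC p
  subst hF
  constructor
  · rw [wirtinger_inv_mul_smul_add_smul_mul hPhip (hinv p) hU1p hU2p hGp hGbarp (hlsp1 p) hGbar₀,
      hZC₁]
  · simp_rw [add_comm (G _ • U1 _)]
    rw [wirtinger_inv_mul_smul_add_smul_mul hPhip (hinv p) hU2p hU1p hGbarp hGp (hlsp2 p) hG₀,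
      hZC₂, add_comm]
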